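/- Let I be an H-ideal of an H-module algebra R such that I is H-semiprime as an H-module algebra. Then the left annihilator I_l = {a ∈ R : (H·a)I = 0}, the right annihilator I_r = {a ∈ R : I(H·a) = 0}, and the two-sided annihilator I* = {a ∈ R : (H·a)I = 0 = I(H·a)} all coincide, and I* is an H-ideal of R. -/

import Mathlib

open scoped TensorProduct

class HModAlg (k H R : Type*) [CommRing k] [Ring H] [Algebra k H]
    [Coalgebra k H] [NonUnitalRing R] [Module k R]
    [SMulCommClass k R R] [IsScalarTower k R R] where
  hsmul : H →ₗ[k] R →ₗ[k] R
  one_hsmul : ∀ r : R, hsmul 1 r = r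
  mul_hsmul : ∀ (h h' : H) (r : R), hsmul (h * h') r = hsmul h (hsmul h' r)
  hsmul_mul : ∀ (h : H) (a b : R),
    hsmul h (a * b) =
      LinearMap.mul' k R
        (TensorProduct.map (hsmul.flip a) (hsmul.flip b) (Coalgebra.comul h))

/-- product f 0 * f 1 * ⋯ * f n -/
def prodSeq {R : Type*} [Mul R] (f : ℕ → R) : ℕ → R
  | 0 => f 0
  | n + 1 => prodSeq f n * f (n + 1)

/-- `I` is a nilpotent subset: some power of it vanishes. -/
def IsNilpotentSet {R : Type*} [Mul R] [Zero R] (I : Set R) : Prop :=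
  ∃ n : ℕ, ∀ f : ℕ → R, (∀ i, f i ∈ I) → prodSeq f n = 0

/-- `I` is nilpotent modulo `J`. -/
def IsNilpotentSetMod {R : Type*} [Mul R] (I J : Set R) : Prop :=
  ∃ n : ℕ, ∀ f : ℕ → R, (∀ i, f i ∈ I) → prodSeq f n ∈ J

section Defs

variable (k H : Type*) {R : Type*} [CommRing k] [Ring H] [Algebra k H]
  [Coalgebra k H] [NonUnitalRing R] [Module k R]
  [SMulCommClass k R R] [IsScalarTower k R R] [HModAlg k H R]

/-- The action of `h : H` on `r : R`. -/
def hact (h : H) (r : R) : R := HModAlg.hsmul (k := k) h r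

/-- `I` is an `H`-ideal of the `H`-module (sub)algebra `B ⊆ R`. -/
structure IsHIdealIn (B I : Set R) : Prop where
  subset : I ⊆ B
  zero_mem : (0 : R) ∈ I
  add_mem : ∀ {x y : R}, x ∈ I → y ∈ I → x + y ∈ I
  neg_mem : ∀ {x : R}, x ∈ I → -x ∈ I
  mul_mem_left : ∀ {x : R}, x ∈ B → ∀ {y : R}, y ∈ I → x * y ∈ I
  mul_mem_right : ∀ {x : R}, x ∈ I → ∀ {y : R}, y ∈ B → x * y ∈ I
  hsmul_mem : ∀ (h : H) {x : R}, x ∈ I → hact k H h x ∈ I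

/-- `I` is an `H`-ideal of `R`. -/
def IsHIdeal (I : Set R) : Prop := IsHIdealIn k H Set.univ I

/-- `R` is `H`-semiprime. -/
def IsHSemiprime : Prop :=
  ∀ I : Set R, IsHIdeal k H I → IsNilpotentSet I → I = {0}

/-- The subalgebra `B` of `R` is `H`-semiprime. -/
def IsHSemiprimeIn (B : Set R) : Prop :=
  ∀ I : Set R, IsHIdealIn k H B I → IsNilpotentSet I → I = {0}

/-- `R` is `H`-prime. -/
def IsHPrime : Prop :=
  ∀ I J : Set R, IsHIdeal k H I → IsHIdeal k H J →
    (∀ a ∈ I, ∀ b ∈ J, a * b = 0) → I = {0} ∨ J = {0}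

/-- The `H`-ideal of `R` generated by `E`. -/
def genHIdeal (E : Set R) : Set R := ⋂₀ {I : Set R | IsHIdeal k H I ∧ E ⊆ I}

end Defs

/-!
The left annihilator `I_l` of an ideal `I` is an `H`-ideal of `R`, so `I ∩ I_l` is an `H`-ideal
of `I`; it squares to zero because `x * y = (1 · x) * y = 0` for `x ∈ I_l`, `y ∈ I`, hence it
vanishes by `H`-semiprimeness. For `a ∈ I_l` and `i ∈ I`, `i * (h · a)` lies in `I ∩ I_l`
(an ideal containing `h · a`), so `I(H · a) = 0`, i.e. `I_l ⊆ I_r`. The reverse inclusion is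
the mirror image, and then `I* = I_l ∩ I_r = I_l`.
-/

section HIdeal

variable {k H R : Type*} [CommRing k] [Ring H] [Algebra k H] [Coalgebra k H]
  [NonUnitalRing R] [Module k R] [SMulCommClass k R R] [IsScalarTower k R R] [HModAlg k H R]

lemma hact_zero (h : H) : hact k H h (0 : R) = 0 :=
  map_zero (HModAlg.hsmul (k := k) (R := R) h)

lemma hact_add (h : H) (x y : R) : hact k H h (x + y) = hact k H h x + hact k H h y :=
  map_add (HModAlg.hsmul (k := k) (R := R) h) x y

lemma hact_neg (h : H) (x : R) : hact k H h (-x) = -hact k H h x :=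
  map_neg (HModAlg.hsmul (k := k) (R := R) h) x

lemma hact_hact (h h' : H) (x : R) : hact k H h (hact k H h' x) = hact k H (h * h') x :=
  (HModAlg.mul_hsmul h h' x).symm

/-- `h · (a * b) = ∑ (h₁ · a) * (h₂ · b)` in Sweedler notation. -/
lemma hact_mul_mem {S : AddSubgroup R} {a b : R}
    (hS : ∀ h₁ h₂ : H, hact k H h₁ a * hact k H h₂ b ∈ S) (h : H) :
    hact k H h (a * b) ∈ S := by
  change HModAlg.hsmul (k := k) h (a * b) ∈ S
  rw [HModAlg.hsmul_mul]
  induction Coalgebra.comul (R := k) h using TensorProduct.induction_on with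
  | zero => simp only [map_zero]; exact S.zero_mem
  | tmul x y => exact hS x y
  | add x y hx hy => rw [map_add, map_add]; exact S.add_mem hx hy

lemma hact_mul_mul_eq_zero {a b i : R}
    (hab : ∀ h₁ h₂ : H, hact k H h₁ a * hact k H h₂ b * i = 0) (h : H) :
    hact k H h (a * b) * i = 0 :=
  hact_mul_mem (S := (AddMonoidHom.mulRight i).ker) hab h

lemma mul_hact_mul_eq_zero {a b i : R}
    (hab : ∀ h₁ h₂ : H, i * (hact k H h₁ a * hact k H h₂ b) = 0) (h : H) :
    i * hact k H h (a * b) = 0 :=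
  hact_mul_mem (S := (AddMonoidHom.mulLeft i).ker) hab h

lemma isNilpotentSet_of_mul_eq_zero {S : Set R} (hS : ∀ x ∈ S, ∀ y ∈ S, x * y = 0) :
    IsNilpotentSet S :=
  ⟨1, fun f hf => hS (f 0) (hf 0) (f 1) (hf 1)⟩

lemma IsHIdeal.inter_isHIdealIn {I J : Set R} (hI : IsHIdeal k H I) (hJ : IsHIdeal k H J) :
    IsHIdealIn k H I (I ∩ J) where
  subset := Set.inter_subset_left
  zero_mem := ⟨hI.zero_mem, hJ.zero_mem⟩
  add_mem hx hy := ⟨hI.add_mem hx.1 hy.1, hJ.add_mem hx.2 hy.2⟩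
  neg_mem hx := ⟨hI.neg_mem hx.1, hJ.neg_mem hx.2⟩
  mul_mem_left hx _ hy := ⟨hI.mul_mem_right hx trivial, hJ.mul_mem_left trivial hy.2⟩
  mul_mem_right hx _ _ := ⟨hI.mul_mem_right hx.1 trivial, hJ.mul_mem_right hx.2 trivial⟩
  hsmul_mem h _ hx := ⟨hI.hsmul_mem h hx.1, hJ.hsmul_mem h hx.2⟩

lemma IsHSemiprimeIn.inter_eq_zero {I J : Set R} (hsp : IsHSemiprimeIn k H I)
    (hI : IsHIdeal k H I) (hJ : IsHIdeal k H J)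
    (hIJ : ∀ x ∈ I ∩ J, ∀ y ∈ I ∩ J, x * y = 0) : I ∩ J = {0} :=
  hsp _ (hI.inter_isHIdealIn hJ) (isNilpotentSet_of_mul_eq_zero hIJ)

variable (k H)

/-- The left annihilator `I_l = {a | (H · a) I = 0}`. -/
def hLeftAnn (I : Set R) : Set R := {a | ∀ h : H, ∀ i ∈ I, hact k H h a * i = 0}

/-- The right annihilator `I_r = {a | I (H · a) = 0}`. -/
def hRightAnn (I : Set R) : Set R := {a | ∀ h : H, ∀ i ∈ I, i * hact k H h a = 0}

variable {k H}

lemma isHIdeal_hLeftAnn {I : Set R} (hI : IsHIdeal k H I) : IsHIdeal k H (hLeftAnn k H I) where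
  subset := Set.subset_univ _
  zero_mem h i _ := by rw [hact_zero, zero_mul]
  add_mem hx hy h i hi := by rw [hact_add, add_mul, hx h i hi, hy h i hi, add_zero]
  neg_mem hx h i hi := by rw [hact_neg, neg_mul, hx h i hi, neg_zero]
  mul_mem_left _ _ hy h i hi :=
    hact_mul_mul_eq_zero (fun h₁ h₂ => by rw [mul_assoc, hy h₂ i hi, mul_zero]) h
  mul_mem_right hx _ _ h i hi :=
    hact_mul_mul_eq_zero
      (fun h₁ h₂ => by rw [mul_assoc, hx h₁ _ (hI.mul_mem_left trivial hi)]) h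
  hsmul_mem h' _ hx h i hi := by rw [hact_hact]; exact hx (h * h') i hi

lemma isHIdeal_hRightAnn {I : Set R} (hI : IsHIdeal k H I) : IsHIdeal k H (hRightAnn k H I) where
  subset := Set.subset_univ _
  zero_mem h i _ := by rw [hact_zero, mul_zero]
  add_mem hx hy h i hi := by rw [hact_add, mul_add, hx h i hi, hy h i hi, add_zero]
  neg_mem hx h i hi := by rw [hact_neg, mul_neg, hx h i hi, neg_zero]
  mul_mem_left _ _ hy h i hi :=
    mul_hact_mul_eq_zero
      (fun h₁ h₂ => by rw [← mul_assoc, hy h₂ _ (hI.mul_mem_right hi trivial)]) h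
  mul_mem_right hx _ _ h i hi :=
    mul_hact_mul_eq_zero (fun h₁ h₂ => by rw [← mul_assoc, hx h₁ i hi, zero_mul]) h
  hsmul_mem h' _ hx h i hi := by rw [hact_hact]; exact hx (h * h') i hi

lemma hLeftAnn_subset_hRightAnn {I : Set R} (hI : IsHIdeal k H I) (hsp : IsHSemiprimeIn k H I) :
    hLeftAnn k H I ⊆ hRightAnn k H I := by
  have hJ := isHIdeal_hLeftAnn hI
  have hzero : I ∩ hLeftAnn k H I = {0} := hsp.inter_eq_zero hI hJ fun x hx y hy => by
    simpa only [hact, HModAlg.one_hsmul] using hx.2 1 y hy.1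
  intro a ha h i hi
  have hmem : i * hact k H h a ∈ I ∩ hLeftAnn k H I :=
    ⟨hI.mul_mem_right hi trivial, hJ.mul_mem_left trivial (hJ.hsmul_mem h ha)⟩
  rwa [hzero] at hmem

lemma hRightAnn_subset_hLeftAnn {I : Set R} (hI : IsHIdeal k H I) (hsp : IsHSemiprimeIn k H I) :
    hRightAnn k H I ⊆ hLeftAnn k H I := by
  have hJ := isHIdeal_hRightAnn hI
  have hzero : I ∩ hRightAnn k H I = {0} := hsp.inter_eq_zero hI hJ fun x hx y hy => by
    simpa only [hact, HModAlg.one_hsmul] using hy.2 1 x hx.1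
  intro a ha h i hi
  have hmem : hact k H h a * i ∈ I ∩ hRightAnn k H I :=
    ⟨hI.mul_mem_left trivial hi, hJ.mul_mem_right (hJ.hsmul_mem h ha) trivial⟩
  rwa [hzero] at hmem

end HIdeal

/-- if the `H`-ideal `I` of `R` is `H`-semiprime as a module algebra,
then `I_l = I_r = I*` and `I*` is an `H`-ideal of `R`. -/
theorem stmt6 {k H R : Type*} [CommRing k] [Ring H] [Algebra k H] [Coalgebra k H]
    [NonUnitalRing R] [Module k R] [SMulCommClass k R R] [IsScalarTower k R R]
    [HModAlg k H R] (I : Set R)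
    (hI : IsHIdeal k H I) (hsp : IsHSemiprimeIn k H I) :
    ({a : R | ∀ (h : H), ∀ i ∈ I, hact k H h a * i = 0} =
        {a : R | ∀ (h : H), ∀ i ∈ I, i * hact k H h a = 0}) ∧
    ({a : R | ∀ (h : H), ∀ i ∈ I, hact k H h a * i = 0} =
        {a : R | (∀ (h : H), ∀ i ∈ I, hact k H h a * i = 0) ∧
          (∀ (h : H), ∀ i ∈ I, i * hact k H h a = 0)}) ∧
    IsHIdeal k H {a : R | (∀ (h : H), ∀ i ∈ I, hact k H h a * i = 0) ∧
        (∀ (h : H), ∀ i ∈ I, i * hact k H h a = 0)} := by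
  have hlr : hLeftAnn k H I = hRightAnn k H I :=
    (hLeftAnn_subset_hRightAnn hI hsp).antisymm (hRightAnn_subset_hLeftAnn hI hsp)
  have hstar : hLeftAnn k H I ∩ hRightAnn k H I = hLeftAnn k H I := by
    rw [← hlr, Set.inter_self]
  exact ⟨hlr, hstar.symm, (congrArg (IsHIdeal k H) hstar).mpr (isHIdeal_hLeftAnn hI)⟩
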